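/- arXiv:math/9903147 — 3 statements merged into one kernel-verified Lean document; each statement's English description precedes it below -/
import Mathlib

section
/- If λ and μ are partitions of n with at most r parts and λ ≥ μ in the dominance order, then c_λ ≥ c_μ, where c_ν = Σ_{i=1}^r ν_i(ν_i + r - 2i + 1); moreover equality holds only if λ = μ. -/
open scoped BigOperators

/-- Dominance order: `Dominates p q` means `p ≥ q`. -/
def Dominates (p q : ℕ → ℕ) : Prop :=
  ∀ i : ℕ, ∑ j ∈ Finset.range i, q j ≤ ∑ j ∈ Finset.range i, p j

private lemma abel_sum (a t : ℕ → ℤ) (r : ℕ) :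
    ∑ i ∈ Finset.range r, a i * t i =
      ∑ k ∈ Finset.range r, (∑ j ∈ Finset.range (k + 1), a j) * (t k - t (k + 1))
        + (∑ j ∈ Finset.range r, a j) * t r := by
  induction r with
  | zero => simp
  | succ r ih =>
    rw [Finset.sum_range_succ, ih,
      Finset.sum_range_succ (fun k => (∑ j ∈ Finset.range (k + 1), a j) * (t k - t (k + 1))),
      Finset.sum_range_succ a]
    ring

/-- If `λ` and `μ` are partitions of `n` with at most `r` parts and `λ ≥ μ` in the
dominance order, then `c_λ ≥ c_μ`, where `c_ν = Σ_{i=1}^r ν_i (ν_i + r - 2i + 1)`;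
equality holds only if `λ = μ`. -/
theorem casimir_monotone_dominance (n r : ℕ) (p q : ℕ → ℕ)
    (hp : Antitone p) (hq : Antitone q)
    (hpparts : ∀ i, r ≤ i → p i = 0) (hqparts : ∀ i, r ≤ i → q i = 0)
    (hpn : ∑ᶠ i : ℕ, p i = n) (hqn : ∑ᶠ i : ℕ, q i = n)
    (hdom : Dominates p q) :
    (∑ i ∈ Finset.range r, (q i : ℤ) * ((q i : ℤ) + r - 2 * i - 1)) ≤
        (∑ i ∈ Finset.range r, (p i : ℤ) * ((p i : ℤ) + r - 2 * i - 1)) ∧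
      ((∑ i ∈ Finset.range r, (q i : ℤ) * ((q i : ℤ) + r - 2 * i - 1)) =
          (∑ i ∈ Finset.range r, (p i : ℤ) * ((p i : ℤ) + r - 2 * i - 1)) → p = q) := by
  set a : ℕ → ℤ := fun i => (p i : ℤ) - q i with ha
  set t : ℕ → ℤ := fun i => (p i : ℤ) + q i + r - 2 * i - 1 with ht
  have hpr : ∑ i ∈ Finset.range r, p i = n := by
    rw [← hpn]
    exact (finsum_eq_sum_of_support_subset p (fun i hi => by
      simp only [Function.support, Set.mem_setOf_eq] at hi
      simp only [Finset.coe_range, Set.mem_Iio]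
      by_contra h
      exact hi (hpparts i (le_of_not_gt h)))).symm
  have hqr : ∑ i ∈ Finset.range r, q i = n := by
    rw [← hqn]
    exact (finsum_eq_sum_of_support_subset q (fun i hi => by
      simp only [Function.support, Set.mem_setOf_eq] at hi
      simp only [Finset.coe_range, Set.mem_Iio]
      by_contra h
      exact hi (hqparts i (le_of_not_gt h)))).symm
  have har : ∑ j ∈ Finset.range r, a j = 0 := by
    rw [ha, Finset.sum_sub_distrib, ← Nat.cast_sum, ← Nat.cast_sum, hpr, hqr, sub_self]
  have key : (∑ i ∈ Finset.range r, (p i : ℤ) * ((p i : ℤ) + r - 2 * i - 1)) -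
      (∑ i ∈ Finset.range r, (q i : ℤ) * ((q i : ℤ) + r - 2 * i - 1)) =
      ∑ k ∈ Finset.range r, (∑ j ∈ Finset.range (k + 1), a j) * (t k - t (k + 1)) := by
    rw [← Finset.sum_sub_distrib]
    have : ∀ i ∈ Finset.range r,
        (p i : ℤ) * ((p i : ℤ) + r - 2 * i - 1) - (q i : ℤ) * ((q i : ℤ) + r - 2 * i - 1)
          = a i * t i := by
      intro i _
      simp only [ha, ht]
      ring
    rw [Finset.sum_congr rfl this, abel_sum, har, zero_mul, add_zero]
  have hAnn : ∀ k, 0 ≤ ∑ j ∈ Finset.range k, a j := by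
    intro k
    rw [ha, Finset.sum_sub_distrib, sub_nonneg]
    push_cast
    exact_mod_cast hdom k
  have hfac : ∀ k, 2 ≤ t k - t (k + 1) := by
    intro k
    simp only [ht]
    push_cast
    have h1 : (p (k + 1) : ℤ) ≤ p k := by exact_mod_cast hp (Nat.le_succ k)
    have h2 : (q (k + 1) : ℤ) ≤ q k := by exact_mod_cast hq (Nat.le_succ k)
    linarith
  have hterm : ∀ k ∈ Finset.range r, 0 ≤ (∑ j ∈ Finset.range (k + 1), a j) * (t k - t (k + 1)) :=
    fun k _ => mul_nonneg (hAnn (k + 1)) (by linarith [hfac k])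
  constructor
  · have := Finset.sum_nonneg hterm
    rw [← key] at this
    linarith
  · intro heq
    have hsum0 : ∑ k ∈ Finset.range r, (∑ j ∈ Finset.range (k + 1), a j) * (t k - t (k + 1)) = 0 := by
      rw [← key, heq, sub_self]
    have hzero := (Finset.sum_eq_zero_iff_of_nonneg hterm).mp hsum0
    have hA0 : ∀ k, k ≤ r → ∑ j ∈ Finset.range k, a j = 0 := by
      intro k hk
      match k with
      | 0 => simp
      | k + 1 =>
        have hk' : k ∈ Finset.range r := Finset.mem_range.mpr (by omega)
        have := hzero _ hk'
        rcases mul_eq_zero.mp this with h | h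
        · exact h
        · exfalso; linarith [hfac k]
    have hpq : ∀ i, i < r → p i = q i := by
      intro i hi
      have h1 := hA0 i (by omega)
      have h2 := hA0 (i + 1) (by omega)
      rw [Finset.sum_range_succ, h1, zero_add, ha] at h2
      have h2' : (p i : ℤ) - q i = 0 := h2
      have : (p i : ℤ) = q i := by linarith
      exact_mod_cast this
    funext i
    by_cases hi : i < r
    · exact hpq i hi
    · rw [hpparts i (by omega), hqparts i (by omega)]
end

section
/- For every partition λ in P_ℓ (i.e., λ = (α_1+1,...,α_d+1 | α_1,...,α_d) in Frobenius notation, a partition of 2ℓ) and every r ≥ number of parts of λ, the Casimir eigenvalue satisfies c_λ = Σ_{i=1}^r λ_i(λ_i + r - 2i + 1) = 2(r+1)ℓ. -/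
open scoped BigOperators

/-- The partition with Frobenius coordinates `(α | β)` (0-indexed data). -/
def frob (d : ℕ) (α β : ℕ → ℕ) (k : ℕ) : ℕ :=
  if k < d then α k + (k + 1)
  else ((Finset.range d).filter fun j => k + 1 ≤ β j + j + 1).card

/-- A downward-closed finite set of naturals is an initial segment. -/
lemma initial_seg (s : Finset ℕ) (h : ∀ j ∈ s, ∀ i < j, i ∈ s) :
    s = Finset.range s.card := by
  ext x
  simp only [Finset.mem_range]
  constructor
  · intro hx
    have hsub : Finset.range (x + 1) ⊆ s := by
      intro i hi
      simp only [Finset.mem_range] at hi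
      rcases Nat.lt_succ_iff_lt_or_eq.mp hi with h' | h'
      · exact h x hx i h'
      · exact h' ▸ hx
    have := Finset.card_le_card hsub
    simpa using this
  · intro hx
    by_contra hxs
    have hsub : s ⊆ Finset.range x := by
      intro i hi
      simp only [Finset.mem_range]
      by_contra hix
      push_neg at hix
      rcases eq_or_lt_of_le hix with h' | h'
      · exact hxs (h' ▸ hi)
      · exact hxs (h i hi x h')
    have := Finset.card_le_card hsub
    simp only [Finset.card_range] at this
    omega

lemma sum_lin (m : ℕ) (c : ℤ) :
    ∑ j ∈ Finset.range m, (2 * (j : ℤ) + c) = m * (m + c - 1) := by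
  induction m with
  | zero => simp
  | succ n ih => rw [Finset.sum_range_succ, ih]; push_cast; ring

lemma sum_ico (d : ℕ) (c : ℤ) : ∀ n, d ≤ n →
    ∑ k ∈ Finset.Ico d n, (c - 2 * (k : ℤ)) =
      ((n : ℤ) - d) * c - ((n : ℤ) * ((n : ℤ) - 1) - (d : ℤ) * ((d : ℤ) - 1)) := by
  intro n hn
  induction n, hn using Nat.le_induction with
  | base => simp
  | succ n hn ih => rw [Finset.sum_Ico_succ_top hn, ih]; push_cast; ring

lemma gauss (d : ℕ) : ∑ j ∈ Finset.range d, (2 * (j : ℤ)) = d * ((d : ℤ) - 1) := by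
  induction d with
  | zero => simp
  | succ n ih => rw [Finset.sum_range_succ, ih]; push_cast; ring

/-- For every partition `λ = (α_1+1,…,α_d+1 | α_1,…,α_d)` in `P_ℓ`
(so `Σ α_i + d = ℓ`) and every `r` at least the number of parts of `λ`,
the Casimir eigenvalue `c_λ = Σ_{i=1}^r λ_i (λ_i + r - 2i + 1)` equals `2(r+1)ℓ`. -/
theorem casimir_P (ℓ r d : ℕ) (α : ℕ → ℕ)
    (hα : ∀ i j, i < j → j < d → α j < α i)
    (hℓ : (∑ i ∈ Finset.range d, α i) + d = ℓ)
    (hr : ∀ i, r ≤ i → frob d (fun i => α i + 1) α i = 0) :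
    ∑ i ∈ Finset.range r,
        (frob d (fun i => α i + 1) α i : ℤ) *
          ((frob d (fun i => α i + 1) α i : ℤ) + r - 2 * i - 1) =
      2 * (r + 1) * ℓ := by
  -- basic consequences of `hr`
  have hdr : d ≤ r := by
    by_contra h
    push_neg at h
    have h0 := hr r le_rfl
    simp [frob, h] at h0
  have har : ∀ j, j < d → α j + j < r := by
    intro j hj
    have h0 := hr r le_rfl
    rw [frob, if_neg (by omega)] at h0
    rw [Finset.card_eq_zero] at h0
    by_contra hc
    push_neg at hc
    have hmem : j ∈ (Finset.range d).filter fun j => r + 1 ≤ α j + j + 1 := by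
      simp only [Finset.mem_filter, Finset.mem_range]
      exact ⟨hj, by omega⟩
    rw [h0] at hmem
    simp at hmem
  have hanti : ∀ i j, i ≤ j → j < d → α j + j ≤ α i + i := by
    intro i j hij hjd
    induction j, hij using Nat.le_induction with
    | base => exact le_rfl
    | succ n hn ih =>
      have h1 : α (n + 1) < α n := hα n (n + 1) (by omega) hjd
      have h2 := ih (by omega)
      omega
  have key : ∀ n j, j + n < d → n ≤ α j := by
    intro n
    induction n with
    | zero => intro j _; omega
    | succ n ih =>
      intro j hj
      have h1 := ih (j + 1) (by omega)
      have h2 := hα j (j + 1) (by omega) (by omega)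
      omega
  have hlow : ∀ j, j < d → d ≤ α j + j + 1 := by
    intro j hj
    have := key (d - 1 - j) j (by omega)
    omega
  -- the filter in `frob` is an initial segment
  have hfilt : ∀ k : ℕ, ((Finset.range d).filter fun j => k + 1 ≤ α j + j + 1)
      = Finset.range (((Finset.range d).filter fun j => k + 1 ≤ α j + j + 1).card) := by
    intro k
    apply initial_seg
    intro j hj i hij
    simp only [Finset.mem_filter, Finset.mem_range] at hj ⊢
    have := hanti i j (le_of_lt hij) hj.1
    exact ⟨lt_trans hij hj.1, by omega⟩
  have hfrobB : ∀ k, d ≤ k → frob d (fun i => α i + 1) α k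
      = ((Finset.range d).filter fun j => k + 1 ≤ α j + j + 1).card := by
    intro k hk
    rw [frob, if_neg (by omega)]
  -- split the sum at d
  rw [Finset.range_eq_Ico,
    ← Finset.sum_Ico_consecutive _ (Nat.zero_le d) hdr, ← Finset.range_eq_Ico]
  -- first part
  have hA : (∑ k ∈ Finset.range d,
        (frob d (fun i => α i + 1) α k : ℤ) *
          ((frob d (fun i => α i + 1) α k : ℤ) + r - 2 * k - 1))
      = ∑ k ∈ Finset.range d,
          (((α k : ℤ) + k + 2) * (((α k : ℤ) + k + 2) + r - 2 * k - 1)) := by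
    refine Finset.sum_congr rfl fun k hk => ?_
    have hk' : k < d := Finset.mem_range.mp hk
    rw [frob, if_pos hk']
    push_cast
    ring
  -- second part
  have hB : (∑ k ∈ Finset.Ico d r,
        (frob d (fun i => α i + 1) α k : ℤ) *
          ((frob d (fun i => α i + 1) α k : ℤ) + r - 2 * k - 1))
      = ∑ j ∈ Finset.range d,
          (((α j : ℤ) + j + 1 - d) * (2 * j + r)
            - (((α j : ℤ) + j + 1) * ((α j : ℤ) + j) - (d : ℤ) * ((d : ℤ) - 1))) := by
    have step1 : ∀ k ∈ Finset.Ico d r,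
        (frob d (fun i => α i + 1) α k : ℤ) *
            ((frob d (fun i => α i + 1) α k : ℤ) + r - 2 * k - 1)
          = ∑ j ∈ Finset.range d,
              (if k + 1 ≤ α j + j + 1 then 2 * (j : ℤ) + ((r : ℤ) - 2 * k) else 0) := by
      intro k hk
      have hk1 : d ≤ k := (Finset.mem_Ico.mp hk).1
      have hs := sum_lin (((Finset.range d).filter fun j => k + 1 ≤ α j + j + 1).card)
        ((r : ℤ) - 2 * k)
      rw [← hfilt k, Finset.sum_filter] at hs
      rw [hfrobB k hk1, hs]
      ring
    rw [Finset.sum_congr rfl step1, Finset.sum_comm]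
    refine Finset.sum_congr rfl fun j hj => ?_
    have hjd : j < d := Finset.mem_range.mp hj
    rw [← Finset.sum_filter]
    have hIco : (Finset.Ico d r).filter (fun k => k + 1 ≤ α j + j + 1)
        = Finset.Ico d (α j + j + 1) := by
      ext k
      simp only [Finset.mem_filter, Finset.mem_Ico]
      have := har j hjd
      omega
    rw [hIco]
    have hcongr : ∀ k ∈ Finset.Ico d (α j + j + 1),
        2 * (j : ℤ) + ((r : ℤ) - 2 * k) = (2 * (j : ℤ) + r) - 2 * (k : ℤ) :=
      fun k _ => by ring
    rw [Finset.sum_congr rfl hcongr, sum_ico d (2 * (j : ℤ) + r) (α j + j + 1) (hlow j hjd)]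
    push_cast
    ring
  rw [hA, hB, ← Finset.sum_add_distrib]
  have hper : ∀ j ∈ Finset.range d,
      (((α j : ℤ) + j + 2) * (((α j : ℤ) + j + 2) + r - 2 * j - 1)
        + (((α j : ℤ) + j + 1 - d) * (2 * j + r)
            - (((α j : ℤ) + j + 1) * ((α j : ℤ) + j) - (d : ℤ) * ((d : ℤ) - 1))))
      = (2 * (r : ℤ) + 2) * (α j : ℤ) + ((r : ℤ) - d) * (2 * (j : ℤ))
          + (3 * (r : ℤ) + 2 - r * d + d ^ 2 - d) := by
    intro j hj
    ring
  rw [Finset.sum_congr rfl hper, Finset.sum_add_distrib, Finset.sum_add_distrib,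
    ← Finset.mul_sum, ← Finset.mul_sum, gauss, Finset.sum_const, Finset.card_range]
  have hS : (∑ j ∈ Finset.range d, (α j : ℤ)) = (ℓ : ℤ) - d := by
    have : ((∑ i ∈ Finset.range d, α i : ℕ) : ℤ) + (d : ℤ) = (ℓ : ℤ) := by
      exact_mod_cast congrArg (Nat.cast : ℕ → ℤ) hℓ
    push_cast at this
    linarith
  rw [hS]
  ring
end

section
/- For partitions λ of n with at most r parts, the maximum value of c_λ = Σ_{i=1}^r λ_i(λ_i + r - 2i + 1) over all such λ is attained uniquely at λ = (n) (the one-row partition), where c_{(n)} = n(n + r - 1). -/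
/-!
Row `i` (counting from 0) contributes `λ_i (λ_i + r - 2i - 1)`, and since `λ_i ≤ n` and `i ≥ 0` this is at most
`λ_i (n + r - 1)`, with a defect of `λ_i (n - λ_i + 2i)`. Summing over the rows gives `n (n + r - 1)`.
For `i ≥ 1` the factor `n - λ_i + 2i` is positive, so equality forces every row but the first to
vanish.
-/

open Finset

section CasimirTerm

variable {R : Type*} [CommRing R] [LinearOrder R] [IsStrictOrderedRing R] {a n i : R}

theorem casimir_term_le (r : R) (ha : 0 ≤ a) (han : a ≤ n) (hi : 0 ≤ i) :
    a * (a + r - 2 * i - 1) ≤ a * (n + r - 1) :=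
  calc a * (a + r - 2 * i - 1) = a * (n + r - 1) - a * (n - a + 2 * i) := by ring
    _ ≤ a * (n + r - 1) := sub_le_self _ (mul_nonneg ha (by linarith))

theorem eq_zero_of_casimir_term_eq {r : R} (han : a ≤ n) (hi : 0 < i)
    (h : a * (a + r - 2 * i - 1) = a * (n + r - 1)) : a = 0 := by
  have hdefect : a * (n - a + 2 * i) = 0 := by linear_combination -h
  exact (mul_eq_zero.mp hdefect).resolve_right (by linarith)

end CasimirTerm

theorem finsum_eq_sum_range_of_eq_zero {M : Type*} [AddCommMonoid M] {f : ℕ → M} {r : ℕ}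
    (h : ∀ i, r ≤ i → f i = 0) : ∑ᶠ i, f i = ∑ i ∈ range r, f i :=
  finsum_eq_sum_of_support_subset f fun i hi => by
    simpa using mt (h i) hi

theorem casimir_max_one_row_general (n r : ℕ) (p : ℕ → ℕ)
    (hparts : ∀ i, r ≤ i → p i = 0) (hpn : ∑ᶠ i : ℕ, p i = n) :
    (∑ i ∈ Finset.range r, (p i : ℤ) * ((p i : ℤ) + r - 2 * i - 1)) ≤
        (n : ℤ) * ((n : ℤ) + r - 1) ∧
      ((∑ i ∈ Finset.range r, (p i : ℤ) * ((p i : ℤ) + r - 2 * i - 1)) =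
          (n : ℤ) * ((n : ℤ) + r - 1) →
        p 0 = n ∧ ∀ i, 1 ≤ i → p i = 0) := by
  have hsum : ∑ i ∈ range r, p i = n := (finsum_eq_sum_range_of_eq_zero hparts).symm.trans hpn
  have hle : ∀ i ∈ range r, (p i : ℤ) ≤ n := fun i hi => by
    exact_mod_cast hsum ▸ single_le_sum (fun _ _ => Nat.zero_le _) hi
  have hterm : ∀ i ∈ range r,
      (p i : ℤ) * ((p i : ℤ) + r - 2 * i - 1) ≤ (p i : ℤ) * ((n : ℤ) + r - 1) :=
    fun i hi => casimir_term_le _ (by positivity) (hle i hi) (by positivity)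
  have htotal : ∑ i ∈ range r, (p i : ℤ) * ((n : ℤ) + r - 1) = n * ((n : ℤ) + r - 1) := by
    rw [← sum_mul, ← Nat.cast_sum, hsum]
  refine ⟨(sum_le_sum hterm).trans htotal.le, fun heq => ?_⟩
  have heach := (sum_eq_sum_iff_of_le hterm).mp (heq.trans htotal.symm)
  have hzero : ∀ i, 1 ≤ i → p i = 0 := fun i hi => by
    by_cases h : i < r
    · have hi' : (0 : ℤ) < i := by exact_mod_cast hi
      exact_mod_cast eq_zero_of_casimir_term_eq (hle i (mem_range.mpr h)) hi'
        (heach i (mem_range.mpr h))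
    · exact hparts i (not_lt.mp h)
  refine ⟨?_, hzero⟩
  rw [← hpn, finsum_eq_single p 0 fun i hi => hzero i (Nat.one_le_iff_ne_zero.mpr hi)]

/-- Among partitions `λ` of `n` with at most `r ≥ 1` parts, the Casimir eigenvalue
`c_λ = Σ_{i=1}^r λ_i (λ_i + r - 2i + 1)` is maximized uniquely by the one-row
partition `(n)`, with value `n(n + r - 1)`. -/
theorem casimir_max_one_row (n r : ℕ) (hr : 1 ≤ r) (p : ℕ → ℕ) (hp : Antitone p)
    (hparts : ∀ i, r ≤ i → p i = 0) (hpn : ∑ᶠ i : ℕ, p i = n) :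
    (∑ i ∈ Finset.range r, (p i : ℤ) * ((p i : ℤ) + r - 2 * i - 1)) ≤
        (n : ℤ) * ((n : ℤ) + r - 1) ∧
      ((∑ i ∈ Finset.range r, (p i : ℤ) * ((p i : ℤ) + r - 2 * i - 1)) =
          (n : ℤ) * ((n : ℤ) + r - 1) →
        p 0 = n ∧ ∀ i, 1 ≤ i → p i = 0) :=
  casimir_max_one_row_general n r p hparts hpn
end
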